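/- Let (C, 𝒮) be a measurable space, I a countable index set, and for each i ∈ I let μ_i be an atomless probability measure on (C, 𝒮) and t_i a positive real number, such that not all the μ_i are identical and Σ_{i∈I} t_i = 1. Then there exist a measurable partition C = C′ ⊔ C″ and positive real numbers t′_i, t″_i (i ∈ I) with Σ_{i∈I} t′_i = Σ_{i∈I} t″_i = 1 such that t′_i · μ_i(C′) + t″_i · μ_i(C″) > t_i for every i ∈ I. -/
import Mathlib


open MeasureTheory

set_option maxHeartbeats 1000000

private lemma aux_two_piece
    {C : Type*} [MeasurableSpace C] {I : Type*} [Countable I]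
    (μ : I → Measure C)
    (hprob : ∀ i, IsProbabilityMeasure (μ i))
    (t : I → ℝ) (hpos : ∀ i, 0 < t i) (hsum : ∑' i, t i = 1)
    (j k : I) (A : Set C) (hA : MeasurableSet A)
    (hpq : (μ k A).toReal < (μ j A).toReal) :
    ∃ (C' : Set C) (t' t'' : I → ℝ),
      MeasurableSet C' ∧
      (∀ i, 0 < t' i) ∧ (∀ i, 0 < t'' i) ∧
      (∑' i, t' i = 1) ∧ (∑' i, t'' i = 1) ∧
      ∀ i, t i < t' i * (μ i C').toReal + t'' i * (μ i C'ᶜ).toReal := by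
  classical
  -- basic facts about the measure values
  set m : I → ℝ := fun i => (μ i A).toReal with hm
  have hm0 : ∀ i, 0 ≤ m i := fun i => ENNReal.toReal_nonneg
  have hm1 : ∀ i, m i ≤ 1 := by
    intro i
    have h1 : μ i A ≤ 1 := prob_le_one
    have := ENNReal.toReal_mono (by simp) h1
    simpa using this
  set p : ℝ := m j with hp
  set q : ℝ := m k with hq
  have hqp : q < p := hpq
  clear_value m p q
  have hjk : j ≠ k := by
    intro h; subst h; exact lt_irrefl _ hpq
  have hp0 : 0 ≤ p := by rw [hp]; exact hm0 j
  have hp1 : p ≤ 1 := by rw [hp]; exact hm1 j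
  have hq0 : 0 ≤ q := by rw [hq]; exact hm0 k
  have hq1 : q ≤ 1 := by rw [hq]; exact hm1 k
  -- constants
  set δ : ℝ := 2 * (1 - q) with hδdef
  set δ' : ℝ := p + q with hδ'def
  have hδpos : 0 < δ := by simp only [hδdef]; nlinarith
  have hδ'pos : 0 < δ' := by simp only [hδ'def]; nlinarith
  set gj : ℝ := (p - q) * (1 + p) with hgjdef
  set gk : ℝ := (1 - q) * (p - q) with hgkdef
  have hgjpos : 0 < gj := by simp only [hgjdef]; nlinarith
  have hgkpos : 0 < gk := by simp only [hgkdef]; nlinarith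
  clear_value gj gk
  set η : ℝ := min gj gk / 2 with hηdef
  have hηpos : 0 < η := by
    have := lt_min hgjpos hgkpos; simp only [hηdef]; linarith
  -- a strictly positive summable family with small sum
  obtain ⟨f, hf⟩ := Countable.exists_injective_nat I
  set c : I → ℝ := fun i => (η / 2) * (1 / 2 : ℝ) ^ (f i) with hcdef
  have hcpos : ∀ i, 0 < c i := fun i => by
    simp only [hcdef]; positivity
  have hgeo : Summable (fun n : ℕ => (1 / 2 : ℝ) ^ n) := summable_geometric_two
  have hcomp : Summable (fun i => (1 / 2 : ℝ) ^ (f i)) := hgeo.comp_injective hf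
  have hcsum : Summable c := by
    simpa [hcdef] using hcomp.mul_left (η / 2)
  set S : ℝ := ∑' i, c i with hSdef
  have hS0 : 0 ≤ S := tsum_nonneg (fun i => (hcpos i).le)
  have hSη : S ≤ η := by
    have hb : (∑' i, (1 / 2 : ℝ) ^ (f i)) ≤ ∑' n : ℕ, (1 / 2 : ℝ) ^ n :=
      Summable.tsum_le_tsum_of_inj f hf (fun n _ => by positivity) (fun i => le_rfl) hcomp hgeo
    have : S = (η / 2) * ∑' i, (1 / 2 : ℝ) ^ (f i) := by
      simp only [hSdef, hcdef]; rw [tsum_mul_left]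
    rw [this, tsum_geometric_two] at *
    nlinarith
  have h2Sgj : 2 * S ≤ gj := by
    have := min_le_left gj gk; simp only [hηdef] at hSη; linarith
  have h2Sgk : 2 * S ≤ gk := by
    have := min_le_right gj gk; simp only [hηdef] at hSη; linarith
  clear_value η c
  -- perturbations
  set a : I → ℝ := fun i =>
    c i + (if i = j then δ else 0) - (if i = k then δ + S else 0) with hadef
  set b : I → ℝ := fun i =>
    c i + (if i = k then δ' else 0) - (if i = j then δ' + S else 0) with hbdef
  have hsummj : ∀ (x : ℝ) (i₀ : I), Summable (fun i => if i = i₀ then x else 0) :=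
    fun x i₀ => (hasSum_ite_eq i₀ x).summable
  have hasumm : Summable a := ((hcsum.add (hsummj δ j)).sub (hsummj (δ + S) k))
  have hbsumm : Summable b := ((hcsum.add (hsummj δ' k)).sub (hsummj (δ' + S) j))
  have hatsum : ∑' i, a i = 0 := by
    have h1 : ∑' i, a i = (∑' i, (c i + if i = j then δ else 0))
        - ∑' i, (if i = k then δ + S else 0) :=
      Summable.tsum_sub (hcsum.add (hsummj δ j)) (hsummj (δ + S) k)
    have h2 : ∑' i, (c i + if i = j then δ else 0)
        = S + ∑' i, (if i = j then δ else 0) := Summable.tsum_add hcsum (hsummj δ j)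
    rw [h1, h2, tsum_ite_eq, tsum_ite_eq]; ring
  have hbtsum : ∑' i, b i = 0 := by
    have h1 : ∑' i, b i = (∑' i, (c i + if i = k then δ' else 0))
        - ∑' i, (if i = j then δ' + S else 0) :=
      Summable.tsum_sub (hcsum.add (hsummj δ' k)) (hsummj (δ' + S) j)
    have h2 : ∑' i, (c i + if i = k then δ' else 0)
        = S + ∑' i, (if i = k then δ' else 0) := Summable.tsum_add hcsum (hsummj δ' k)
    rw [h1, h2, tsum_ite_eq, tsum_ite_eq]; ring
  clear_value S δ δ' a b
  -- t is summable
  have htsumm : Summable t := by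
    by_contra h
    rw [tsum_eq_zero_of_not_summable h] at hsum
    norm_num at hsum
  -- the scaling factor
  set M : ℝ := δ + δ' + S + 1 with hMdef
  have hMpos : 0 < M := by simp only [hMdef]; linarith
  set ε : ℝ := min (t j) (t k) / (2 * M) with hεdef
  have hεpos : 0 < ε := by
    have := lt_min (hpos j) (hpos k)
    simp only [hεdef]; positivity
  have hεM : ε * M ≤ min (t j) (t k) / 2 := by
    rw [hεdef, div_mul_eq_mul_div, div_le_div_iff₀ (by positivity) (by norm_num)]
    nlinarith [lt_min (hpos j) (hpos k)]
  clear_value M ε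
  set t' : I → ℝ := fun i => t i + ε * a i with ht'def
  set t'' : I → ℝ := fun i => t i + ε * b i with ht''def
  -- positivity of t'
  have ht'pos : ∀ i, 0 < t' i := by
    intro i
    by_cases hik : i = k
    · subst hik
      have hik2 : i ≠ j := fun h => hjk h.symm
      have hai : a i = c i - (δ + S) := by simp [hadef, hik2]
      have h1 : ε * (δ + S) ≤ ε * M := by
        apply mul_le_mul_of_nonneg_left _ hεpos.le
        simp only [hMdef]; linarith
      have h2 : min (t j) (t i) ≤ t i := min_le_right _ _
      have h3 : 0 < ε * c i := mul_pos hεpos (hcpos i)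
      have h4 : ε * (δ + S) ≤ t i / 2 := le_trans h1 (le_trans hεM (by linarith))
      have h5 : ε * (c i - (δ + S)) = ε * c i - ε * (δ + S) := by ring
      simp only [ht'def, hai]
      rw [h5]
      linarith [hpos i]
    · have hai : c i ≤ a i := by
        simp only [hadef]
        rw [if_neg hik]
        have : (0:ℝ) ≤ if i = j then δ else 0 := by positivity
        linarith
      have h3 : ε * c i ≤ ε * a i := mul_le_mul_of_nonneg_left hai hεpos.le
      have h4 : 0 < ε * c i := mul_pos hεpos (hcpos i)
      have := hpos i
      simp only [ht'def]; linarith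
  have ht''pos : ∀ i, 0 < t'' i := by
    intro i
    by_cases hij : i = j
    · subst hij
      have hik2 : i ≠ k := hjk
      have hbi : b i = c i - (δ' + S) := by simp [hbdef, hik2]
      have h1 : ε * (δ' + S) ≤ ε * M := by
        apply mul_le_mul_of_nonneg_left _ hεpos.le
        simp only [hMdef]; linarith
      have h2 : min (t i) (t k) ≤ t i := min_le_left _ _
      have h3 : 0 < ε * c i := mul_pos hεpos (hcpos i)
      have h4 : ε * (δ' + S) ≤ t i / 2 := le_trans h1 (le_trans hεM (by linarith))
      have h5 : ε * (c i - (δ' + S)) = ε * c i - ε * (δ' + S) := by ring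
      simp only [ht''def, hbi]
      rw [h5]
      linarith [hpos i]
    · have hbi : c i ≤ b i := by
        simp only [hbdef]
        rw [if_neg hij]
        have : (0:ℝ) ≤ if i = k then δ' else 0 := by positivity
        linarith
      have h3 : ε * c i ≤ ε * b i := mul_le_mul_of_nonneg_left hbi hεpos.le
      have h4 : 0 < ε * c i := mul_pos hεpos (hcpos i)
      have := hpos i
      simp only [ht''def]; linarith
  -- sums
  have ht'sum : ∑' i, t' i = 1 := by
    simp only [ht'def]
    rw [Summable.tsum_add htsumm (hasumm.mul_left ε), tsum_mul_left, hatsum, hsum]; ring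
  have ht''sum : ∑' i, t'' i = 1 := by
    simp only [ht''def]
    rw [Summable.tsum_add htsumm (hbsumm.mul_left ε), tsum_mul_left, hbtsum, hsum]; ring
  -- the main inequality
  refine ⟨A, t', t'', hA, ht'pos, ht''pos, ht'sum, ht''sum, ?_⟩
  intro i
  have hcompl : (μ i Aᶜ).toReal = 1 - m i := by
    have h1 : μ i Aᶜ = 1 - μ i A := prob_compl_eq_one_sub hA
    rw [h1, ENNReal.toReal_sub_of_le prob_le_one (by simp)]
    simp [hm]
  have hmA : (μ i A).toReal = m i := by rw [hm]
  rw [hmA, hcompl]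
  have key : 0 < a i * m i + b i * (1 - m i) := by
    have hmi0 := hm0 i
    have hmi1 := hm1 i
    by_cases hij : i = j
    · subst hij
      have hik : i ≠ k := hjk
      have hai : a i = c i + δ := by simp [hadef, hik]
      have hbi : b i = c i - (δ' + S) := by simp [hbdef, hik]
      rw [hai, hbi]
      have hmi : m i = p := hp.symm
      rw [hmi]
      have hkey : δ * p - δ' * (1 - p) = gj := by
        rw [hδdef, hδ'def, hgjdef]; ring
      nlinarith [hcpos i, mul_nonneg hS0 hp0]
    · by_cases hik : i = k
      · subst hik
        have hai : a i = c i - (δ + S) := by simp [hadef, hij]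
        have hbi : b i = c i + δ' := by simp [hbdef, hij]
        rw [hai, hbi]
        have hmi : m i = q := hq.symm
        rw [hmi]
        have hkey : δ' * (1 - q) - δ * q = gk := by
          rw [hδdef, hδ'def, hgkdef]; ring
        nlinarith [hcpos i, mul_nonneg hS0 (by linarith : (0:ℝ) ≤ 1 - q)]
      · have hai : a i = c i := by simp [hadef, hij, hik]
        have hbi : b i = c i := by simp [hbdef, hij, hik]
        rw [hai, hbi]
        nlinarith [hcpos i]
  have : t' i * m i + t'' i * (1 - m i)
      = t i + ε * (a i * m i + b i * (1 - m i)) := by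
    simp only [ht'def, ht''def]; ring
  rw [this]
  linarith [mul_pos hεpos key]

theorem exists_two_piece_split_boosting_entitlements
    {C : Type*} [MeasurableSpace C] {I : Type*} [Countable I]
    (μ : I → Measure C)
    (hprob : ∀ i, IsProbabilityMeasure (μ i))
    (hatomless : ∀ i, NoAtoms (μ i))
    (t : I → ℝ) (hpos : ∀ i, 0 < t i) (hsum : ∑' i, t i = 1)
    (hne : ∃ j k, μ j ≠ μ k) :
    ∃ (C' : Set C) (t' t'' : I → ℝ),
      MeasurableSet C' ∧
      (∀ i, 0 < t' i) ∧ (∀ i, 0 < t'' i) ∧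
      (∑' i, t' i = 1) ∧ (∑' i, t'' i = 1) ∧
      ∀ i, t i < t' i * (μ i C').toReal + t'' i * (μ i C'ᶜ).toReal := by
  obtain ⟨j, k, hjk⟩ := hne
  have : ∃ A, MeasurableSet A ∧ μ j A ≠ μ k A := by
    by_contra h
    push_neg at h
    exact hjk (Measure.ext fun s hs => h s hs)
  obtain ⟨A, hA, hAne⟩ := this
  have hne' : (μ j A).toReal ≠ (μ k A).toReal := by
    intro h
    exact hAne ((ENNReal.toReal_eq_toReal_iff' (measure_ne_top _ _) (measure_ne_top _ _)).mp h)
  rcases hne'.lt_or_gt with h | h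
  · exact aux_two_piece μ hprob t hpos hsum k j A hA h
  · exact aux_two_piece μ hprob t hpos hsum j k A hA h
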